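/- arXiv:1010.1873 — 2 statements merged into one kernel-verified Lean document; each statement's English description precedes it below -/
import Mathlib

section
/- Given the interpolation estimates ‖u − I_h u‖²_{0,K} ≤ c h^{2(k+1)}|u|²_{k+1,K}, h‖a·∇(u − I_h u)‖²_{0,K} ≤ c h^{2k+1}|u|²_{k+1,K}, h⁻¹‖u − I_h u‖²_{0,K} ≤ c h^{2k+1}|u|²_{k+1,K}, and ‖u − I_h u‖²_{0,∂K} ≤ c h^{2k+1}|u|²_{k+1,K}, with h ≤ 1 and the facet deviation term vanishing (since Ī_h u is the trace of I_h u), one obtains ⫴(u,u) − (I_h u, Ī_h u)⫴_{A'} ≤ C h^{k+1/2}‖u‖_{k+1,Ω}. Combined with the quasi-optimality estimate ⫴u − u_h⫴_A ≤ (1 + C_A/β_A) inf ⫴u − v_h⫴_{A'}, this yields ⫴u − u_h⫴_A ≤ C' h^{k+1/2}‖u‖_{k+1,Ω} and in particular ‖u − u_h‖_{0,Ω} ≤ C'' h^{k+1/2}‖u‖_{k+1,Ω}. -/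
/-!
Every contribution to the squared `A'`-norm of the interpolation error is at most
`c h^{2k+1} |u|²_{k+1,K}` per cell: the `L²` term carries the better power `h^{2k+2}`,
which `h ≤ 1` degrades to `h^{2k+1}`, and the facet deviation vanishes. Summing over
the cells and taking square roots gives the rate `h^{k+1/2}` for the interpolation
error, quasi-optimality transfers it to `⫴u − u_h⫴_A`, and the `L²` error follows
from `μ ‖u − u_h‖² ≤ ⫴u − u_h⫴²_A`.
-/

open Finset

theorem Finset.sum_le_mul_sum_of_le {ι R : Type*} [Semiring R] [PartialOrder R]
    [IsOrderedAddMonoid R] {s : Finset ι} {f g : ι → R} (a : R)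
    (hfg : ∀ i ∈ s, f i ≤ a * g i) : ∑ i ∈ s, f i ≤ a * ∑ i ∈ s, g i :=
  (sum_le_sum hfg).trans_eq (mul_sum s g a).symm

theorem Real.rpow_add_half_sq {h : ℝ} (hh : 0 ≤ h) (k : ℕ) :
    (h ^ ((k : ℝ) + 1 / 2)) ^ 2 = h ^ (2 * k + 1) := by
  rw [← Real.rpow_natCast _ 2, ← Real.rpow_mul hh, ← Real.rpow_natCast]
  push_cast
  ring_nf

theorem Real.sqrt_le_sqrt_mul_mul_of_le {X K t U : ℝ} (hK : 0 ≤ K) (ht : 0 ≤ t) (hU : 0 ≤ U)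
    (hX : X ≤ K * t ^ 2 * U ^ 2) : √X ≤ √K * t * U := by
  rw [Real.sqrt_le_iff]
  refine ⟨by positivity, ?_⟩
  rwa [mul_pow, mul_pow, Real.sq_sqrt hK]

theorem Real.le_div_sqrt_of_mul_sq_le {μ L A : ℝ} (hμ : 0 < μ) (hA : 0 ≤ A)
    (hLA : μ * L ^ 2 ≤ A ^ 2) : L ≤ A / √μ := by
  rw [le_div_iff₀ (Real.sqrt_pos.2 hμ), mul_comm]
  refine (le_abs_self _).trans (abs_le_of_sq_le_sq ?_ hA)
  rwa [mul_pow, Real.sq_sqrt hμ.le]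

section InterpolationError

variable {ι : Type*} [Fintype ι]

/-- `⫴(u,u) − (I_h u, Ī_h u)⫴²_{A'}` in terms of its cell and boundary contributions. -/
def interpErrSq (μ : ℝ) (eL2 eAdv eDev : ι → ℝ) (eBdry : ℝ) (eInv eFac : ι → ℝ) : ℝ :=
  μ * (∑ K, eL2 K) + (∑ K, eAdv K) + (∑ K, eDev K) + eBdry + (∑ K, eInv K) + ∑ K, eFac K

theorem interpErrSq_le {μ c h : ℝ} {k : ℕ} {eL2 eAdv eInv eFac eDev sn : ι → ℝ}
    {eBdry : ℝ} (hμ : 0 ≤ μ) (hc : 0 ≤ c) (hh : 0 ≤ h) (hh1 : h ≤ 1)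
    (hsn : ∀ K, 0 ≤ sn K)
    (heL2 : ∀ K, eL2 K ≤ c * h ^ (2 * (k + 1)) * sn K)
    (heAdv : ∀ K, eAdv K ≤ c * h ^ (2 * k + 1) * sn K)
    (heDev : ∀ K, eDev K = 0)
    (heInv : ∀ K, eInv K ≤ c * h ^ (2 * k + 1) * sn K)
    (heFac : ∀ K, eFac K ≤ c * h ^ (2 * k + 1) * sn K)
    (heBdry : eBdry ≤ c * h ^ (2 * k + 1) * ∑ K, sn K) :
    interpErrSq μ eL2 eAdv eDev eBdry eInv eFac ≤ (μ + 4) * c * h ^ (2 * k + 1) * ∑ K, sn K := by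
  have hS : 0 ≤ ∑ K, sn K := sum_nonneg fun K _ => hsn K
  have hL2 : ∑ K, eL2 K ≤ c * h ^ (2 * k + 1) * ∑ K, sn K := by
    refine (sum_le_mul_sum_of_le _ fun K _ => heL2 K).trans ?_
    have : h ^ (2 * (k + 1)) ≤ h ^ (2 * k + 1) := pow_le_pow_of_le_one hh hh1 (by omega)
    gcongr
  have hAdv := sum_le_mul_sum_of_le _ fun K (_ : K ∈ univ) => heAdv K
  have hInv := sum_le_mul_sum_of_le _ fun K (_ : K ∈ univ) => heInv K
  have hFac := sum_le_mul_sum_of_le _ fun K (_ : K ∈ univ) => heFac K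
  have hDev : ∑ K, eDev K = 0 := sum_eq_zero fun K _ => heDev K
  unfold interpErrSq
  nlinarith [mul_le_mul_of_nonneg_left hL2 hμ]

theorem sqrt_interpErrSq_le {μ c h Unorm : ℝ} {k : ℕ} {eL2 eAdv eInv eFac eDev sn : ι → ℝ}
    {eBdry : ℝ} (hμ : 0 ≤ μ) (hc : 0 ≤ c) (hh : 0 ≤ h) (hh1 : h ≤ 1) (hU : 0 ≤ Unorm)
    (hsn : ∀ K, 0 ≤ sn K)
    (heL2 : ∀ K, eL2 K ≤ c * h ^ (2 * (k + 1)) * sn K)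
    (heAdv : ∀ K, eAdv K ≤ c * h ^ (2 * k + 1) * sn K)
    (heDev : ∀ K, eDev K = 0)
    (heInv : ∀ K, eInv K ≤ c * h ^ (2 * k + 1) * sn K)
    (heFac : ∀ K, eFac K ≤ c * h ^ (2 * k + 1) * sn K)
    (heBdry : eBdry ≤ c * h ^ (2 * k + 1) * ∑ K, sn K)
    (hsnU : ∑ K, sn K ≤ Unorm ^ 2) :
    √(interpErrSq μ eL2 eAdv eDev eBdry eInv eFac) ≤
      √((μ + 4) * c) * h ^ ((k : ℝ) + 1 / 2) * Unorm := by
  refine Real.sqrt_le_sqrt_mul_mul_of_le (by positivity) (by positivity) hU ?_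
  rw [Real.rpow_add_half_sq hh]
  refine (interpErrSq_le hμ hc hh hh1 hsn heL2 heAdv heDev heInv heFac heBdry).trans ?_
  gcongr

end InterpolationError

theorem stmt_13_general {ι : Type*} [Fintype ι]
    (μ c CA βA Unorm : ℝ) (k : ℕ)
    (hμ : 0 < μ) (hc : 0 < c) (hCA : 0 < CA) (hβA : 0 < βA)
    (hU : 0 ≤ Unorm) :
    ∃ C > (0 : ℝ), ∃ C' > (0 : ℝ), ∃ C'' > (0 : ℝ),
      ∀ (h : ℝ) (eL2 eAdv eInv eFac eDev sn : ι → ℝ) (eBdry Aerr L2err : ℝ),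
        0 < h → h ≤ 1 →
        (∀ K, 0 ≤ eL2 K) → (∀ K, 0 ≤ eAdv K) → (∀ K, 0 ≤ eInv K) →
        (∀ K, 0 ≤ eFac K) → (∀ K, 0 ≤ sn K) → 0 ≤ eBdry → 0 ≤ Aerr → 0 ≤ L2err →
        (∀ K, eL2 K ≤ c * h ^ (2 * (k + 1)) * sn K) →
        (∀ K, eAdv K ≤ c * h ^ (2 * k + 1) * sn K) →
        (∀ K, eDev K = 0) →
        (∀ K, eInv K ≤ c * h ^ (2 * k + 1) * sn K) →
        (∀ K, eFac K ≤ c * h ^ (2 * k + 1) * sn K) →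
        eBdry ≤ c * h ^ (2 * k + 1) * ∑ K, sn K →
        (∑ K, sn K) ≤ Unorm ^ 2 →
        Aerr ≤ (1 + CA / βA) *
          Real.sqrt (μ * (∑ K, eL2 K) + (∑ K, eAdv K) + (∑ K, eDev K) + eBdry
            + (∑ K, eInv K) + ∑ K, eFac K) →
        μ * L2err ^ 2 ≤ Aerr ^ 2 →
        (Real.sqrt (μ * (∑ K, eL2 K) + (∑ K, eAdv K) + (∑ K, eDev K) + eBdry
            + (∑ K, eInv K) + ∑ K, eFac K) ≤ C * h ^ ((k : ℝ) + 1 / 2) * Unorm ∧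
          Aerr ≤ C' * h ^ ((k : ℝ) + 1 / 2) * Unorm ∧
          L2err ≤ C'' * h ^ ((k : ℝ) + 1 / 2) * Unorm) := by
  set C := √((μ + 4) * c)
  have hCqo : 0 < 1 + CA / βA := by positivity
  refine ⟨C, by positivity, (1 + CA / βA) * C, by positivity,
    (1 + CA / βA) * C / √μ, by positivity, ?_⟩
  intro h eL2 eAdv eInv eFac eDev sn eBdry Aerr L2err hh hh1 _ _ _ _ hsn _ hA _
    heL2 heAdv heDev heInv heFac heBdry hsnU hAerr hL2err
  have hInterp : √(interpErrSq μ eL2 eAdv eDev eBdry eInv eFac) ≤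
      C * h ^ ((k : ℝ) + 1 / 2) * Unorm :=
    sqrt_interpErrSq_le hμ.le hc.le hh.le hh1 hU hsn heL2 heAdv heDev heInv heFac heBdry hsnU
  have hA' : Aerr ≤ (1 + CA / βA) * C * h ^ ((k : ℝ) + 1 / 2) * Unorm := by
    refine hAerr.trans ?_
    rw [mul_assoc, mul_assoc, ← mul_assoc C]
    exact mul_le_mul_of_nonneg_left hInterp hCqo.le
  refine ⟨hInterp, hA', ?_⟩
  calc L2err ≤ Aerr / √μ := Real.le_div_sqrt_of_mul_sq_le hμ hA hL2err
    _ ≤ (1 + CA / βA) * C * h ^ ((k : ℝ) + 1 / 2) * Unorm / √μ := by gcongr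
    _ = (1 + CA / βA) * C / √μ * h ^ ((k : ℝ) + 1 / 2) * Unorm := by ring

/-- Best approximation for the hyperbolic case: the per-cell interpolation
estimates (with vanishing facet deviation) give
`⫴(u,u) − (I_h u, Ī_h u)⫴_{A'} ≤ C h^{k+1/2} ‖u‖_{k+1,Ω}`, and combined with the
quasi-optimality estimate this yields `⫴u − u_h⫴_A ≤ C' h^{k+1/2} ‖u‖_{k+1,Ω}` and
`‖u − u_h‖_{0,Ω} ≤ C'' h^{k+1/2} ‖u‖_{k+1,Ω}`.
Here, for the interpolation error `e = u − I_h u` on each cell `K`: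
`eL2 K = ‖e‖²_{0,K}`, `eAdv K = h_K‖a·∇e‖²_{0,K}`, `eInv K = h_K⁻¹‖e‖²_{0,K}`,
`eFac K` the facet terms `‖a_n^{1/2}·‖²` on `∂K`, `eDev K = ‖(u−Ī_h u)−(u−I_h u)‖²_{0,∂K}`,
`eBdry` the `Γ`-boundary term, `sn K = |u|²_{k+1,K}`, `Unorm = ‖u‖_{k+1,Ω}`,
`Aerr = ⫴u − u_h⫴_A` and `L2err = ‖u − u_h‖_{0,Ω}`. -/
theorem stmt_13 {ι : Type*} [Fintype ι]
    (μ c CA βA Unorm : ℝ) (k : ℕ)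
    (hμ : 0 < μ) (hμ1 : μ ≤ 1) (hc : 0 < c) (hCA : 0 < CA) (hβA : 0 < βA)
    (hU : 0 ≤ Unorm) :
    ∃ C > (0 : ℝ), ∃ C' > (0 : ℝ), ∃ C'' > (0 : ℝ),
      ∀ (h : ℝ) (eL2 eAdv eInv eFac eDev sn : ι → ℝ) (eBdry Aerr L2err : ℝ),
        0 < h → h ≤ 1 →
        (∀ K, 0 ≤ eL2 K) → (∀ K, 0 ≤ eAdv K) → (∀ K, 0 ≤ eInv K) →
        (∀ K, 0 ≤ eFac K) → (∀ K, 0 ≤ sn K) → 0 ≤ eBdry → 0 ≤ Aerr → 0 ≤ L2err →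
        (∀ K, eL2 K ≤ c * h ^ (2 * (k + 1)) * sn K) →
        (∀ K, eAdv K ≤ c * h ^ (2 * k + 1) * sn K) →
        (∀ K, eDev K = 0) →
        (∀ K, eInv K ≤ c * h ^ (2 * k + 1) * sn K) →
        (∀ K, eFac K ≤ c * h ^ (2 * k + 1) * sn K) →
        eBdry ≤ c * h ^ (2 * k + 1) * ∑ K, sn K →
        (∑ K, sn K) ≤ Unorm ^ 2 →
        Aerr ≤ (1 + CA / βA) *
          Real.sqrt (μ * (∑ K, eL2 K) + (∑ K, eAdv K) + (∑ K, eDev K) + eBdry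
            + (∑ K, eInv K) + ∑ K, eFac K) →
        μ * L2err ^ 2 ≤ Aerr ^ 2 →
        (Real.sqrt (μ * (∑ K, eL2 K) + (∑ K, eAdv K) + (∑ K, eDev K) + eBdry
            + (∑ K, eInv K) + ∑ K, eFac K) ≤ C * h ^ ((k : ℝ) + 1 / 2) * Unorm ∧
          Aerr ≤ C' * h ^ ((k : ℝ) + 1 / 2) * Unorm ∧
          L2err ≤ C'' * h ^ ((k : ℝ) + 1 / 2) * Unorm) :=
  stmt_13_general μ c CA βA Unorm k hμ hc hCA hβA hU
end

section
/- Suppose the dual problem B(v, w) = ∫_Ω (u − u_h)·v dx for all v, admits a solution w with elliptic regularity ‖w‖_{2,Ω} ≤ c‖u − u_h‖_{0,Ω}, and suppose: B is symmetric and consistent (B(u − u_h, w_I) = 0 for the interpolant w_I of w), continuous |B(x,y)| ≤ C‖x‖_{D'}‖y‖_{D'}, and the interpolation error satisfies ‖w − w_I‖_{D'} ≤ c h ‖w‖_{2,Ω}. Then ‖u − u_h‖_{0,Ω} ≤ c' h ‖u − u_h‖_{D'}, and combined with the energy estimate ‖u − u_h‖_{D'} ≤ c'' h^k ‖u‖_{k+1,Ω},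 one gets ‖u − u_h‖_{0,Ω} ≤ C h^{k+1}‖u‖_{k+1,Ω}. -/
/-!
Aubin–Nitsche trick: testing the dual problem with the error `e = u − u_h` and subtracting the
interpolant of the dual solution (allowed by Galerkin orthogonality) gives
`‖e‖₀² = B(e, w − w_I) ≤ C ‖e‖_{D'} ‖w − w_I‖_{D'}`, and interpolation plus elliptic regularity
bound `‖w − w_I‖_{D'}` by `h ‖e‖₀`. Dividing by `‖e‖₀` gains one power of `h` over the energy
estimate.
-/

theorem Seminorm.le_of_dual_approx {V : Type*} [AddCommGroup V] [Module ℝ V]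
    (B : V →ₗ[ℝ] V →ₗ[ℝ] ℝ) (p q : Seminorm ℝ V) {e w wI : V} {C c : ℝ} (hC : 0 ≤ C) (hc : 0 ≤ c)
    (hdual : B e w = q e ^ 2) (horth : B e wI = 0)
    (hcont : ∀ x y : V, |B x y| ≤ C * p x * p y) (happrox : p (w - wI) ≤ c * q e) :
    q e ≤ C * c * p e := by
  have hsq : q e ^ 2 ≤ C * c * p e * q e :=
    calc q e ^ 2 = B e (w - wI) := by rw [map_sub, hdual, horth, sub_zero]
      _ ≤ |B e (w - wI)| := le_abs_self _
      _ ≤ C * p e * p (w - wI) := hcont _ _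
      _ ≤ C * p e * (c * q e) := by gcongr
      _ = C * c * p e * q e := by ring
  rcases (apply_nonneg q e).eq_or_lt with hzero | hpos
  · rw [← hzero]
    positivity
  · exact le_of_mul_le_mul_right (by rwa [sq] at hsq) hpos

theorem stmt_16_general {V : Type*} [AddCommGroup V] [Module ℝ V]
    (B : V →ₗ[ℝ] V →ₗ[ℝ] ℝ) (nD' n0 : Seminorm ℝ V)
    (u uh w wI : V) (Cc creg cint cen W2 h Uk : ℝ) (k : ℕ)
    (hC : 0 < Cc) (hcreg : 0 < creg) (hcint : 0 < cint) (hcen : 0 < cen)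
    (hh : 0 < h)
    (hdual : B (u - uh) w = (n0 (u - uh)) ^ 2)
    (hreg : W2 ≤ creg * n0 (u - uh))
    (hcons : B (u - uh) wI = 0)
    (hcont : ∀ x y : V, |B x y| ≤ Cc * nD' x * nD' y)
    (hinterp : nD' (w - wI) ≤ cint * h * W2)
    (henergy : nD' (u - uh) ≤ cen * h ^ k * Uk) :
    ∃ c' > (0 : ℝ), n0 (u - uh) ≤ c' * h * nD' (u - uh) ∧
      ∃ C > (0 : ℝ), n0 (u - uh) ≤ C * h ^ (k + 1) * Uk := by
  have happrox : nD' (w - wI) ≤ cint * creg * h * n0 (u - uh) :=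
    calc nD' (w - wI) ≤ cint * h * W2 := hinterp
      _ ≤ cint * h * (creg * n0 (u - uh)) := by gcongr
      _ = cint * creg * h * n0 (u - uh) := by ring
  have hL2 : n0 (u - uh) ≤ Cc * cint * creg * h * nD' (u - uh) := by
    have := Seminorm.le_of_dual_approx B nD' n0 hC.le (by positivity) hdual hcons hcont happrox
    linarith
  refine ⟨Cc * cint * creg, by positivity, hL2, Cc * cint * creg * cen, by positivity, ?_⟩
  calc n0 (u - uh) ≤ Cc * cint * creg * h * nD' (u - uh) := hL2
    _ ≤ Cc * cint * creg * h * (cen * h ^ k * Uk) := by gcongr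
    _ = Cc * cint * creg * cen * h ^ (k + 1) * Uk := by ring

/-- Aubin–Nitsche duality argument for the diffusive limit: with a dual solution
`w` satisfying elliptic regularity (`W2 = ‖w‖_{2,Ω} ≤ c_reg ‖u−u_h‖_{0,Ω}`),
adjoint consistency (symmetry of `B`), Galerkin orthogonality against the
interpolant `wI`, continuity in the `D'` norm, the interpolation estimate
`‖w − wI‖_{D'} ≤ c_int h ‖w‖_{2,Ω}` and the energy estimate
`‖u − u_h‖_{D'} ≤ c_en h^k ‖u‖_{k+1,Ω}`, one gets
`‖u−u_h‖_{0,Ω} ≤ c' h ‖u−u_h‖_{D'}` and `‖u−u_h‖_{0,Ω} ≤ C h^{k+1} ‖u‖_{k+1,Ω}`. -/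
theorem stmt_16 {V : Type*} [AddCommGroup V] [Module ℝ V]
    (B : V →ₗ[ℝ] V →ₗ[ℝ] ℝ) (nD' n0 : Seminorm ℝ V)
    (u uh w wI : V) (Cc creg cint cen W2 h Uk : ℝ) (k : ℕ)
    (hsymm : ∀ x y : V, B x y = B y x)
    (hC : 0 < Cc) (hcreg : 0 < creg) (hcint : 0 < cint) (hcen : 0 < cen)
    (hh : 0 < h) (hUk : 0 ≤ Uk) (hW2 : 0 ≤ W2)
    (hdual : B (u - uh) w = (n0 (u - uh)) ^ 2)
    (hreg : W2 ≤ creg * n0 (u - uh))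
    (hcons : B (u - uh) wI = 0)
    (hcont : ∀ x y : V, |B x y| ≤ Cc * nD' x * nD' y)
    (hinterp : nD' (w - wI) ≤ cint * h * W2)
    (henergy : nD' (u - uh) ≤ cen * h ^ k * Uk) :
    ∃ c' > (0 : ℝ), n0 (u - uh) ≤ c' * h * nD' (u - uh) ∧
      ∃ C > (0 : ℝ), n0 (u - uh) ≤ C * h ^ (k + 1) * Uk :=
  stmt_16_general B nD' n0 u uh w wI Cc creg cint cen W2 h Uk k hC hcreg hcint hcen hh hdual hreg
    hcons hcont hinterp henergy
end
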